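/- arXiv:1004.4622 — 8 statements merged into one kernel-verified Lean document; each statement's English description precedes it below -/
import Mathlib

section
/- Let b ≥ 5 be a natural number and B = 2^b (so B ≥ 32 and B is divisible by 4). Let P, j be natural numbers with j ≤ P, let H : ℕ → ℕ satisfy H(i) ≤ 3 for all i, let δ ∈ ℝ with |δ| ≤ B^(−(j+1)), and set x = δ + Σ_{i=0}^{P} H(i)/B^i. Define the natural number Y = Σ_{i=0}^{j} H(i)·B^(j−i). Then |B^j · x − Y| ≤ 1/4 and Y mod 4 = H(j). -/
/-!
Multiplying by `B ^ j` turns the digits `H 0, …, H j` into the integer `Y` and leaves `B ^ j * δ`,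
of size at most `1 / B`, plus the tail `∑ₖ H (j + 1 + k) / B ^ (k + 1)`, which lies in
`[0, 3 / (B - 1)]` by comparison with a geometric series. For `B ≥ 32` these add up to less
than `1 / 4`. Since `4 ∣ B`, every term of `Y` but the last is divisible by `4`.
-/

open Finset

theorem sum_mul_pow_sub_mod_of_dvd {m B : ℕ} (hm : m ∣ B) (a : ℕ → ℕ) (j : ℕ) :
    (∑ i ∈ range (j + 1), a i * B ^ (j - i)) % m = a j % m := by
  obtain ⟨q, hq⟩ : m ∣ ∑ i ∈ range j, a i * B ^ (j - i) := by
    refine dvd_sum fun i hi => Dvd.dvd.mul_left (hm.trans (dvd_pow_self B ?_)) _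
    exact Nat.sub_ne_zero_of_lt (mem_range.mp hi)
  rw [sum_range_succ, Nat.sub_self, pow_zero, mul_one, hq, Nat.mul_add_mod]

theorem pow_mul_sum_div_pow_sub_sum {K : Type*} [Field K] {B : K} (hB : B ≠ 0)
    (a : ℕ → K) {j P : ℕ} (hj : j ≤ P) :
    B ^ j * ∑ i ∈ range (P + 1), a i / B ^ i - ∑ i ∈ range (j + 1), a i * B ^ (j - i) =
      ∑ k ∈ range (P - j), a (j + 1 + k) / B ^ (k + 1) := by
  obtain ⟨n, rfl⟩ := Nat.exists_eq_add_of_le hj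
  rw [show j + n + 1 = (j + 1) + n by ring, sum_range_add, mul_add, mul_sum, mul_sum,
    Nat.add_sub_cancel_left]
  have head : ∀ i ∈ range (j + 1), B ^ j * (a i / B ^ i) = a i * B ^ (j - i) := fun i hi => by
    rw [pow_sub₀ B hB (Nat.lt_succ_iff.mp (mem_range.mp hi))]
    ring
  have tail : ∀ k ∈ range n, B ^ j * (a (j + 1 + k) / B ^ (j + 1 + k)) =
      a (j + 1 + k) / B ^ (k + 1) := fun k _ => by
    rw [show j + 1 + k = j + (k + 1) by ring, pow_add]
    field_simp
  rw [sum_congr rfl head, sum_congr rfl tail, add_sub_cancel_left]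

theorem sum_div_pow_succ_le {B c : ℝ} (hB : 1 < B) (hc : 0 ≤ c) {d : ℕ → ℝ}
    (hd : ∀ k, d k ≤ c) (n : ℕ) :
    ∑ k ∈ range n, d k / B ^ (k + 1) ≤ c / (B - 1) := by
  have hr0 : 0 < B⁻¹ := inv_pos.mpr (zero_lt_one.trans hB)
  have hr1 : B⁻¹ < 1 := inv_lt_one_of_one_lt₀ hB
  calc ∑ k ∈ range n, d k / B ^ (k + 1)
      ≤ ∑ k ∈ range n, c * B⁻¹ * B⁻¹ ^ k := sum_le_sum fun k _ => by
        rw [div_eq_mul_inv, ← inv_pow, pow_succ', ← mul_assoc]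
        gcongr
        exact hd k
    _ = c * B⁻¹ * ∑ k ∈ range n, B⁻¹ ^ k := (mul_sum _ _ _).symm
    _ ≤ c * B⁻¹ * (1 - B⁻¹)⁻¹ := by
      refine mul_le_mul_of_nonneg_left ?_ (by positivity)
      have hgeom := geom_sum_Ico_le_of_lt_one (m := 0) (n := n) hr0.le hr1
      rw [← range_eq_Ico] at hgeom
      simpa using hgeom
    _ = c / (B - 1) := by field_simp

/-- Decoding step in the proof of the main lemma: the real number `x` encoding a
column of the discrete tableau can be written as `(Y + η)·B^(−j)` with `|η| ≤ 1/4`,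
and the digit `H(j)` is recovered as `Y mod 4`. -/
theorem tableau_column_decoding
    (b : ℕ) (hb : 5 ≤ b) (B : ℕ) (hB : B = 2 ^ b)
    (P j : ℕ) (hj : j ≤ P)
    (H : ℕ → ℕ) (hH : ∀ i, H i ≤ 3)
    (δ : ℝ) (hδ : |δ| ≤ (B : ℝ) ^ (-((j : ℤ) + 1)))
    (x : ℝ) (hx : x = δ + ∑ i ∈ Finset.range (P + 1), (H i : ℝ) / (B : ℝ) ^ i)
    (Y : ℕ) (hY : Y = ∑ i ∈ Finset.range (j + 1), H i * B ^ (j - i)) :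
    |(B : ℝ) ^ j * x - (Y : ℝ)| ≤ 1 / 4 ∧ Y % 4 = H j := by
  have hB32 : (32 : ℝ) ≤ B := by
    rw [hB]; exact_mod_cast (Nat.pow_le_pow_right two_pos hb : 2 ^ 5 ≤ 2 ^ b)
  have hB4 : 4 ∣ B := hB ▸ (Nat.pow_dvd_pow 2 (by omega : 2 ≤ b))
  refine ⟨?_, by rw [hY, sum_mul_pow_sub_mod_of_dvd hB4, Nat.mod_eq_of_lt (by linarith [hH j])]⟩
  set tail := ∑ k ∈ range (P - j), (H (j + 1 + k) : ℝ) / (B : ℝ) ^ (k + 1)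
  have hsplit : (B : ℝ) ^ j * x - Y = (B : ℝ) ^ j * δ + tail := by
    have hdigits := pow_mul_sum_div_pow_sub_sum (B := (B : ℝ)) (by positivity) (H ·) hj
    rw [hx, hY]
    push_cast
    linear_combination hdigits
  have hshift : |(B : ℝ) ^ j * δ| ≤ (B : ℝ)⁻¹ := by
    rw [abs_mul, abs_of_pos (by positivity), ← zpow_natCast]
    calc (B : ℝ) ^ (j : ℤ) * |δ| ≤ (B : ℝ) ^ (j : ℤ) * (B : ℝ) ^ (-((j : ℤ) + 1)) := by gcongr
      _ = (B : ℝ)⁻¹ := by rw [← zpow_add₀ (by positivity)]; simp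
  have htail : tail ≤ 3 / (B - 1) := sum_div_pow_succ_le (by linarith) zero_le_three
    (fun k => (by exact_mod_cast hH (j + 1 + k) : (H (j + 1 + k) : ℝ) ≤ 3)) (P - j)
  have htail0 : 0 ≤ tail := sum_nonneg fun k _ => by positivity
  have hsmall : (B : ℝ)⁻¹ + 3 / (B - 1) ≤ 1 / 4 := by
    rw [inv_eq_one_div, div_add_div _ _ (by positivity) (by linarith),
      div_le_div_iff₀ (by nlinarith) (by norm_num)]
    nlinarith
  rw [hsplit]
  calc |(B : ℝ) ^ j * δ + tail| ≤ |(B : ℝ) ^ j * δ| + |tail| := abs_add_le _ _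
    _ ≤ (B : ℝ)⁻¹ + 3 / (B - 1) := by rw [abs_of_nonneg htail0]; gcongr
    _ ≤ 1 / 4 := hsmall
end

section
/- Fix a natural number i and let f : ℕ → ℤ satisfy f(S XOR (3·2^(2i+1))) = −f(S) for every natural number S (where XOR is bitwise exclusive or on natural numbers, so XOR with 3·2^(2i+1) flips exactly the binary digits at positions 2i+1 and 2i+2). Then for every natural number m, Σ_{S=0}^{m·2^(2i+3) − 1} f(S) = 0. -/
/-!
XOR with `c = 3 · 2^(2i+1) < 2^(2i+3)` only changes the binary digits below position `2i+3`, so it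
maps each block of `2^(2i+3)` consecutive numbers, and hence `range (m · 2^(2i+3))`, to itself.
Since `c ≠ 0` it has no fixed points, so it pairs off the terms of the sum into pairs `f S + f (S ^^^ c)`,
each of which vanishes by hypothesis.
-/

namespace Nat

theorem xor_div_two_pow_of_lt {c n : ℕ} (a : ℕ) (hc : c < 2 ^ n) : (a ^^^ c) / 2 ^ n = a / 2 ^ n := by
  rw [xor_div_two_pow, Nat.div_eq_of_lt hc, xor_zero]

theorem xor_lt_mul_two_pow {a c m n : ℕ} (ha : a < m * 2 ^ n) (hc : c < 2 ^ n) :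
    a ^^^ c < m * 2 ^ n := by
  rw [← Nat.div_lt_iff_lt_mul (Nat.two_pow_pos n)] at ha ⊢
  rwa [xor_div_two_pow_of_lt a hc]

end Nat

/-- Cancellation over complete windows: if flipping the binary digits at positions
`2i+1` and `2i+2` negates `f`, then the sum of `f` over any whole number of blocks
of length `2^(2i+3)` vanishes. -/
theorem xor_flip_cancellation
    (i : ℕ) (f : ℕ → ℤ)
    (hf : ∀ S : ℕ, f (S ^^^ (3 * 2 ^ (2 * i + 1))) = -f S) :
    ∀ m : ℕ, ∑ S ∈ Finset.range (m * 2 ^ (2 * i + 3)), f S = 0 := by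
  intro m
  have hc : 3 * 2 ^ (2 * i + 1) < 2 ^ (2 * i + 3) := by
    rw [show 2 ^ (2 * i + 3) = 4 * 2 ^ (2 * i + 1) by ring]
    have := Nat.two_pow_pos (2 * i + 1)
    omega
  exact Finset.sum_involution (fun S _ => S ^^^ (3 * 2 ^ (2 * i + 1)))
    (fun S _ => by rw [hf, add_neg_cancel])
    (fun S _ _ => xor_left_eq_self_iff.not.2 (by positivity))
    (fun S hS => Finset.mem_range.2 (Nat.xor_lt_mul_two_pow (Finset.mem_range.1 hS) hc))
    (fun S _ => xor_cancel_right _ _)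
end

section
/- Fix a natural number i and let f : ℕ → ℤ satisfy: (a) f(S XOR (3·2^(2i+1))) = −f(S) for every S (where XOR is bitwise exclusive or, so XOR with 3·2^(2i+1) flips exactly the binary digits at positions 2i+1 and 2i+2); (b) |f(S)| ≤ 1 for all S; and (c) f(S) = 0 whenever S mod 2^(2i+1) ≠ 2^(2i) (i.e., f is supported on odd multiples of 2^(2i)). Then for every natural number T, |Σ_{S=0}^{T−1} f(S)| ≤ 2. -/
/-!
Since `f` vanishes off `S ≡ 2^(2i) (mod 2^(2i+1))`, its partial sums are the partial sums of
`g k = f (2^(2i+1) k + 2^(2i))`, and the flip of bits `2i+1, 2i+2` of `S` becomes the flip of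
bits `0, 1` of `k`, so `g (k ^^^ 3) = -g k`. This pairs `4q` with `4q+3` and `4q+1` with `4q+2`:
every block of four consecutive values of `g` sums to zero, and inside a block the partial sums
are `0`, `g(4q)`, `g(4q) + g(4q+1)` and `g(4q)` again.
-/

open Finset

theorem Nat.two_pow_mul_add_xor_two_pow_mul_add {m a c : ℕ} (q b : ℕ) (ha : a < 2 ^ m)
    (hc : c < 2 ^ m) : (2 ^ m * q + a) ^^^ (2 ^ m * b + c) = 2 ^ m * (q ^^^ b) + (a ^^^ c) := by
  refine Nat.eq_of_testBit_eq fun j => ?_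
  rw [Nat.testBit_xor, Nat.testBit_two_pow_mul_add _ ha, Nat.testBit_two_pow_mul_add _ hc,
    Nat.testBit_two_pow_mul_add _ (Nat.xor_lt_two_pow ha hc)]
  by_cases h : j < m <;> simp [h]

theorem Nat.four_mul_add_xor_three (q : ℕ) {j : ℕ} (hj : j < 4) :
    (4 * q + j) ^^^ 3 = 4 * q + (3 - j) := by
  have h := Nat.two_pow_mul_add_xor_two_pow_mul_add (m := 2) q 0 hj (c := 3) (by norm_num)
  norm_num at h
  rw [h]
  interval_cases j <;> rfl

theorem Finset.sum_range_eq_sum_range_mul_add_of_mod_ne {M : Type*} [AddCommMonoid M]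
    {a b : ℕ} (hb : b < a) {f : ℕ → M} (hf : ∀ n, n % a ≠ b → f n = 0) (T : ℕ) :
    ∑ n ∈ range T, f n = ∑ k ∈ range ((T - b + a - 1) / a), f (a * k + b) := by
  have ha : 0 < a := by omega
  have hlt (k : ℕ) : k < (T - b + a - 1) / a ↔ a * k + b < T := by
    rw [Nat.lt_iff_add_one_le, Nat.le_div_iff_mul_le ha, add_one_mul, mul_comm]
    omega
  rw [← sum_filter_of_ne (p := fun n => n % a = b) fun n _ h => by_contra fun hn => h (hf n hn)]
  symm
  refine sum_nbij' (a * · + b) (· / a) (fun k hk => ?_) (fun n hn => ?_) (fun k _ => ?_)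
    (fun n hn => ?_) fun _ _ => rfl
  · simp only [mem_range, mem_filter] at hk ⊢
    exact ⟨(hlt k).1 hk, by rw [Nat.mul_add_mod, Nat.mod_eq_of_lt hb]⟩
  · simp only [mem_range, mem_filter] at hn ⊢
    rw [hlt, ← hn.2, Nat.div_add_mod]
    exact hn.1
  · simp only [Nat.mul_add_div ha, Nat.div_eq_of_lt hb, add_zero]
  · simp only [mem_filter] at hn
    simp only [← hn.2, Nat.div_add_mod]

section XorThree

variable {G : Type*} [AddCommGroup G] {F : ℕ → G}

theorem apply_four_mul_add_three_sub (hF : ∀ k, F (k ^^^ 3) = -F k) (q : ℕ) {j : ℕ}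
    (hj : j < 4) : F (4 * q + (3 - j)) = -F (4 * q + j) := by
  rw [← Nat.four_mul_add_xor_three q hj, hF]

theorem sum_range_four_mul_eq_zero (hF : ∀ k, F (k ^^^ 3) = -F k) (q : ℕ) :
    ∑ k ∈ range (4 * q), F k = 0 := by
  induction q with
  | zero => simp
  | succ q ih =>
    rw [mul_add_one, sum_range_add, ih]
    have h3 : F (4 * q + 3) = -F (4 * q + 0) :=
      apply_four_mul_add_three_sub hF q (j := 0) (by norm_num)
    have h2 : F (4 * q + 2) = -F (4 * q + 1) :=
      apply_four_mul_add_three_sub hF q (j := 1) (by norm_num)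
    simp only [sum_range_succ, range_zero, sum_empty, h3, h2]
    abel

theorem abs_sum_range_le_of_xor_three [LinearOrder G] [IsOrderedAddMonoid G] {c : G}
    (hF : ∀ k, F (k ^^^ 3) = -F k) (hc : ∀ k, |F k| ≤ c) (K : ℕ) :
    |∑ k ∈ range K, F k| ≤ c + c := by
  have hc0 : 0 ≤ c := (abs_nonneg _).trans (hc 0)
  obtain ⟨q, r, hr, rfl⟩ : ∃ q r, r < 4 ∧ K = 4 * q + r :=
    ⟨K / 4, K % 4, K.mod_lt (by norm_num), (K.div_add_mod 4).symm⟩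
  have h2 : F (4 * q + 2) = -F (4 * q + 1) :=
    apply_four_mul_add_three_sub hF q (j := 1) (by norm_num)
  rw [sum_range_add, sum_range_four_mul_eq_zero hF, zero_add]
  interval_cases r <;>
    simp only [sum_range_succ, range_zero, sum_empty, zero_add, add_zero, h2, add_neg_cancel_right]
  · simpa using add_nonneg hc0 hc0
  · exact (hc _).trans (le_add_of_nonneg_left hc0)
  · exact (abs_add_le _ _).trans (add_le_add (hc _) (hc _))
  · exact (hc _).trans (le_add_of_nonneg_left hc0)

end XorThree

/-- Partial sums stay bounded: if flipping the binary digits at positions `2i+1` and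
`2i+2` negates `f`, `|f| ≤ 1`, and `f` is supported on odd multiples of `2^(2i)`,
then all partial sums of `f` lie in `[−2, 2]`. -/
theorem xor_flip_partial_sums_bounded
    (i : ℕ) (f : ℕ → ℤ)
    (hf1 : ∀ S : ℕ, f (S ^^^ (3 * 2 ^ (2 * i + 1))) = -f S)
    (hf2 : ∀ S : ℕ, |f S| ≤ 1)
    (hf3 : ∀ S : ℕ, S % 2 ^ (2 * i + 1) ≠ 2 ^ (2 * i) → f S = 0) :
    ∀ T : ℕ, |∑ S ∈ Finset.range T, f S| ≤ 2 := by
  intro T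
  have hlt : 2 ^ (2 * i) < 2 ^ (2 * i + 1) := Nat.pow_lt_pow_right (by norm_num) (by omega)
  have hflip (k : ℕ) : (2 ^ (2 * i + 1) * k + 2 ^ (2 * i)) ^^^ (3 * 2 ^ (2 * i + 1)) =
      2 ^ (2 * i + 1) * (k ^^^ 3) + 2 ^ (2 * i) := by
    simpa [mul_comm] using Nat.two_pow_mul_add_xor_two_pow_mul_add k 3 hlt (Nat.two_pow_pos _)
  rw [sum_range_eq_sum_range_mul_add_of_mod_ne hlt hf3]
  exact abs_sum_range_le_of_xor_three (fun k => by rw [← hflip, hf1]) (fun _ => hf2 _) _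
end

section
/- With the QBF tableau construction below (for n ≥ 1, matrix ψ, quantifiers q, increment function G, and tableau H), the final value satisfies: H(n+1, 2^(2n) + 1) = 1 if Φ_n (the truth value of the quantified Boolean formula Q_n x_n … Q_1 x_1. ψ(x_1,…,x_n)) is true, and H(n+1, 2^(2n) + 1) = 0 otherwise. -/
/-- Prepend `c` as the value of the innermost remaining variable. -/
def qbfPrepend {n i : ℕ} (c : Bool) (b : Fin (n - (i + 1)) → Bool) :
    Fin (n - i) → Bool :=
  fun k => if h : (k : ℕ) = 0 then c else b ⟨(k : ℕ) - 1, by have hk := k.isLt; omega⟩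

/-- Partial evaluations `Φ_i` of the quantified Boolean formula:
`Φ_0 = ψ`, and `Φ_{i+1}(b)` quantifies over the innermost remaining variable,
existentially if `q(i) = true` and universally if `q(i) = false`. -/
def qbfPhi (n : ℕ) (ψ : (Fin n → Bool) → Bool) (q : Fin n → Bool) :
    (i : ℕ) → (Fin (n - i) → Bool) → Bool
  | 0 => ψ
  | (i + 1) => fun b =>
      if h : i < n then
        if q ⟨i, h⟩ then
          qbfPhi n ψ q i (qbfPrepend false b) || qbfPhi n ψ q i (qbfPrepend true b)
        else
          qbfPhi n ψ q i (qbfPrepend false b) && qbfPhi n ψ q i (qbfPrepend true b)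
      else false

/-- The increment function `G` of the discrete initial value problem encoding QBF. -/
def qbfG (n : ℕ) (ψ : (Fin n → Bool) → Bool) (q : Fin n → Bool)
    (i : ℕ) (S : ℕ) (Y : ℤ) : ℤ :=
  if i ≤ n ∧ S % 2 ^ (2 * i + 1) = 2 ^ (2 * i) then
    (if S.testBit (2 * i + 2) then -1 else 1) *
      (if i = 0 then
        (if ψ (fun k => xor (S.testBit (2 * (k : ℕ) + 1)) (S.testBit (2 * (k : ℕ) + 2)))
          then 1 else 0)
      else
        if h : i - 1 < n then
          (if q ⟨i - 1, h⟩ then (if 1 ≤ Y then 1 else 0) else (if 2 ≤ Y then 1 else 0))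
        else 0)
  else 0

/-- The tableau `H` of the discrete initial value problem:
`H(i, 0) = H(0, T) = 0` and `H(i+1, T+1) = H(i+1, T) + G(i, T, H(i, T))`. -/
def qbfH (n : ℕ) (ψ : (Fin n → Bool) → Bool) (q : Fin n → Bool) : ℕ → ℕ → ℤ
  | _, 0 => 0
  | 0, _ => 0
  | (i + 1), (T + 1) => qbfH n ψ q (i + 1) T + qbfG n ψ q i T (qbfH n ψ q i T)

namespace QbfTab

/-- Gray-code assignment at sample index `m`, level `i`. -/
def A (n i m : ℕ) : Fin (n - i) → Bool :=
  fun k => xor (m.testBit (2 * (k : ℕ))) (m.testBit (2 * (k : ℕ) + 1))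

variable (n : ℕ) (ψ : (Fin n → Bool) → Bool) (q : Fin n → Bool)

/-- The 0/1 value of `Φ_i` at the assignment of sample index `m`. -/
def f (i m : ℕ) : ℤ := if qbfPhi n ψ q i (A n i m) then 1 else 0

lemma H_eq_sum (i T : ℕ) :
    qbfH n ψ q (i + 1) T = ∑ S ∈ Finset.range T, qbfG n ψ q i S (qbfH n ψ q i S) := by
  induction T with
  | zero => simp [qbfH]
  | succ T ih => rw [Finset.sum_range_succ, ← ih]; rfl

lemma mod_sample (i j : ℕ) : (2 ^ (2 * i) * (2 * j + 1)) % 2 ^ (2 * i + 1) = 2 ^ (2 * i) := by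
  have h : 2 ^ (2 * i) * (2 * j + 1) = 2 ^ (2 * i) + j * 2 ^ (2 * i + 1) := by ring
  rw [h, Nat.add_mul_mod_self_right]
  exact Nat.mod_eq_of_lt (Nat.pow_lt_pow_right one_lt_two (by omega))

lemma exists_of_mod {i S : ℕ} (h : S % 2 ^ (2 * i + 1) = 2 ^ (2 * i)) :
    ∃ j, S = 2 ^ (2 * i) * (2 * j + 1) := by
  refine ⟨S / 2 ^ (2 * i + 1), ?_⟩
  have key := Nat.div_add_mod S (2 ^ (2 * i + 1))
  rw [h] at key
  conv_lhs => rw [← key]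
  ring

lemma G_eq_zero {i S : ℕ} (Y : ℤ) (h : ∀ j, S ≠ 2 ^ (2 * i) * (2 * j + 1)) :
    qbfG n ψ q i S Y = 0 := by
  unfold qbfG
  rw [if_neg]
  rintro ⟨-, hm⟩
  obtain ⟨j, rfl⟩ := exists_of_mod hm
  exact h j rfl

lemma H_sample (i J T : ℕ) (hT : ∀ j, 2 ^ (2 * i) * (2 * j + 1) < T ↔ j < J) :
    qbfH n ψ q (i + 1) T = ∑ j ∈ Finset.range J,
      qbfG n ψ q i (2 ^ (2 * i) * (2 * j + 1))
        (qbfH n ψ q i (2 ^ (2 * i) * (2 * j + 1))) := by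
  have hP : 0 < 2 ^ (2 * i) := by positivity
  have hinj : ∀ a ∈ Finset.range J, ∀ b ∈ Finset.range J,
      2 ^ (2 * i) * (2 * a + 1) = 2 ^ (2 * i) * (2 * b + 1) → a = b := by
    intro a _ b _ hab
    have := Nat.eq_of_mul_eq_mul_left hP hab
    omega
  have himg : ∑ S ∈ (Finset.range J).image (fun j => 2 ^ (2 * i) * (2 * j + 1)),
      qbfG n ψ q i S (qbfH n ψ q i S) = ∑ j ∈ Finset.range J,
      qbfG n ψ q i (2 ^ (2 * i) * (2 * j + 1))
        (qbfH n ψ q i (2 ^ (2 * i) * (2 * j + 1))) := Finset.sum_image hinj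
  rw [H_eq_sum, ← himg]
  symm
  apply Finset.sum_subset
  · intro S hS
    simp only [Finset.mem_image, Finset.mem_range] at hS ⊢
    obtain ⟨j, hj, rfl⟩ := hS
    exact (hT j).mpr hj
  · intro S hS hS'
    apply G_eq_zero
    intro j hj
    apply hS'
    simp only [Finset.mem_image, Finset.mem_range]
    refine ⟨j, ?_, hj.symm⟩
    rw [← (hT j), ← hj]
    exact Finset.mem_range.mp hS

-- bit helpers
lemma tb2 (t c m : ℕ) (hc : c < 4) : (4 * t + c).testBit (m + 2) = t.testBit m := by
  simp only [Nat.testBit_eq_decide_div_mod_eq]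
  have h4 : (2 : ℕ) ^ (m + 2) = 4 * 2 ^ m := by ring
  have hdiv : (4 * t + c) / 4 = t := by omega
  rw [h4, ← Nat.div_div_eq_div_mul, hdiv]

lemma tb2' (t m : ℕ) : (4 * t).testBit (m + 2) = t.testBit m := by
  have := tb2 t 0 m (by omega)
  simpa using this

lemma tb1 (m j : ℕ) : (2 * m + 1).testBit (j + 1) = m.testBit j := by
  simp only [Nat.testBit_eq_decide_div_mod_eq]
  have h2 : (2 : ℕ) ^ (j + 1) = 2 * 2 ^ j := by ring
  have hdiv : (2 * m + 1) / 2 = m := by omega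
  rw [h2, ← Nat.div_div_eq_div_mul, hdiv]

lemma tb_sign (i j : ℕ) : (2 ^ (2 * i) * (2 * j + 1)).testBit (2 * i + 2) = j.testBit 1 := by
  simp only [Nat.testBit_eq_decide_div_mod_eq]
  have h : 2 ^ (2 * i) * (2 * j + 1) / 2 ^ (2 * i + 2) = (2 * j + 1) / 4 := by
    rw [pow_add, Nat.mul_div_mul_left _ _ (by positivity)]
    norm_num
  rw [h, decide_eq_decide]
  omega

-- A relations
lemma A_succ_false (i t : ℕ) : A n i (4 * t) = qbfPrepend false (A n (i + 1) t) := by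
  funext k
  by_cases hk : (k : ℕ) = 0
  · simp only [A, qbfPrepend, hk, dif_pos]
    have b0 : (4 * t).testBit 0 = false := by simp [Nat.testBit_eq_decide_div_mod_eq]; omega
    have b1 : (4 * t).testBit 1 = false := by simp [Nat.testBit_eq_decide_div_mod_eq]; omega
    norm_num [b0, b1]
  · simp only [A, qbfPrepend, hk, dif_neg, not_false_iff]
    have e1 : 2 * (k : ℕ) = 2 * ((k : ℕ) - 1) + 2 := by omega
    have e2 : 2 * (k : ℕ) + 1 = (2 * ((k : ℕ) - 1) + 1) + 2 := by omega
    rw [e2, e1, tb2' t _, tb2' t _]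

lemma A_succ_true (i t : ℕ) : A n i (4 * t + 1) = qbfPrepend true (A n (i + 1) t) := by
  funext k
  by_cases hk : (k : ℕ) = 0
  · simp only [A, qbfPrepend, hk, dif_pos]
    have b0 : (4 * t + 1).testBit 0 = true := by simp [Nat.testBit_eq_decide_div_mod_eq]; omega
    have b1 : (4 * t + 1).testBit 1 = false := by simp [Nat.testBit_eq_decide_div_mod_eq]; omega
    norm_num [b0, b1]
  · simp only [A, qbfPrepend, hk, dif_neg, not_false_iff]
    have e1 : 2 * (k : ℕ) = 2 * ((k : ℕ) - 1) + 2 := by omega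
    have e2 : 2 * (k : ℕ) + 1 = (2 * ((k : ℕ) - 1) + 1) + 2 := by omega
    rw [e2, e1, tb2 t 1 _ (by omega), tb2 t 1 _ (by omega)]

lemma A_three (i t : ℕ) : A n i (4 * t + 3) = A n i (4 * t) := by
  funext k
  by_cases hk : (k : ℕ) = 0
  · simp only [A, hk]
    have b0 : (4 * t + 3).testBit 0 = true := by simp [Nat.testBit_eq_decide_div_mod_eq]; omega
    have b1 : (4 * t + 3).testBit 1 = true := by simp [Nat.testBit_eq_decide_div_mod_eq]; omega
    have c0 : (4 * t).testBit 0 = false := by simp [Nat.testBit_eq_decide_div_mod_eq]; omega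
    have c1 : (4 * t).testBit 1 = false := by simp [Nat.testBit_eq_decide_div_mod_eq]; omega
    norm_num [b0, b1, c0, c1]
  · simp only [A]
    have e1 : 2 * (k : ℕ) = 2 * ((k : ℕ) - 1) + 2 := by omega
    have e2 : 2 * (k : ℕ) + 1 = (2 * ((k : ℕ) - 1) + 1) + 2 := by omega
    rw [e2, e1, tb2 t 3 _ (by omega), tb2 t 3 _ (by omega), tb2' t _, tb2' t _]

lemma A_two (i t : ℕ) : A n i (4 * t + 2) = A n i (4 * t + 1) := by
  funext k
  by_cases hk : (k : ℕ) = 0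
  · simp only [A, hk]
    have b0 : (4 * t + 2).testBit 0 = false := by simp [Nat.testBit_eq_decide_div_mod_eq]; omega
    have b1 : (4 * t + 2).testBit 1 = true := by simp [Nat.testBit_eq_decide_div_mod_eq]; omega
    have c0 : (4 * t + 1).testBit 0 = true := by simp [Nat.testBit_eq_decide_div_mod_eq]; omega
    have c1 : (4 * t + 1).testBit 1 = false := by simp [Nat.testBit_eq_decide_div_mod_eq]; omega
    norm_num [b0, b1, c0, c1]
  · simp only [A]
    have e1 : 2 * (k : ℕ) = 2 * ((k : ℕ) - 1) + 2 := by omega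
    have e2 : 2 * (k : ℕ) + 1 = (2 * ((k : ℕ) - 1) + 1) + 2 := by omega
    rw [e2, e1, tb2 t 2 _ (by omega), tb2 t 2 _ (by omega),
      tb2 t 1 _ (by omega), tb2 t 1 _ (by omega)]

lemma signed_sum (i m : ℕ) :
    ∑ j ∈ Finset.range (4 * m + 2), (if j.testBit 1 then (-1 : ℤ) else 1) * f n ψ q i j
      = f n ψ q i (4 * m) + f n ψ q i (4 * m + 1) := by
  induction m with
  | zero =>
    have b0 : Nat.testBit 0 1 = false := by decide
    have b1 : Nat.testBit 1 1 = false := by decide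
    norm_num [Finset.sum_range_succ, b0, b1]
  | succ m ih =>
    have h6 : 4 * (m + 1) + 2 = (4 * m + 2) + 1 + 1 + 1 + 1 := by ring
    rw [h6, Finset.sum_range_succ, Finset.sum_range_succ, Finset.sum_range_succ,
      Finset.sum_range_succ, ih]
    have e2 : (4 * m + 2) + 1 = 4 * m + 3 := by ring
    have e3 : (4 * m + 2) + 1 + 1 = 4 * m + 4 := by ring
    have e4 : (4 * m + 2) + 1 + 1 + 1 = 4 * m + 5 := by ring
    rw [e2, e3, e4]
    have b2 : (4 * m + 2).testBit 1 = true := by simp [Nat.testBit_eq_decide_div_mod_eq]; omega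
    have b3 : (4 * m + 3).testBit 1 = true := by simp [Nat.testBit_eq_decide_div_mod_eq]; omega
    have b4 : (4 * m + 4).testBit 1 = false := by simp [Nat.testBit_eq_decide_div_mod_eq]; omega
    have b5 : (4 * m + 5).testBit 1 = false := by simp [Nat.testBit_eq_decide_div_mod_eq]; omega
    rw [b2, b3, b4, b5]
    have f3 : f n ψ q i (4 * m + 3) = f n ψ q i (4 * m) := by
      unfold f; rw [A_three]
    have f2 : f n ψ q i (4 * m + 2) = f n ψ q i (4 * m + 1) := by
      unfold f; rw [A_two]
    have g5 : 4 * (m + 1) + 1 = 4 * m + 5 := by ring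
    have g4 : 4 * (m + 1) = 4 * m + 4 := by ring
    rw [f2, f3, g5, g4]
    norm_num

lemma G_sample : ∀ i, i ≤ n → ∀ m,
    qbfG n ψ q i (2 ^ (2 * i) * (2 * m + 1)) (qbfH n ψ q i (2 ^ (2 * i) * (2 * m + 1)))
      = (if m.testBit 1 then -1 else 1) * f n ψ q i m := by
  intro i
  induction i with
  | zero =>
    intro _ m
    unfold qbfG
    rw [if_pos ⟨Nat.zero_le n, mod_sample 0 m⟩]
    simp only [mul_zero, pow_zero, one_mul, Nat.zero_add, zero_add, if_pos rfl]
    have hsgn : (2 * m + 1).testBit 2 = m.testBit 1 := by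
      have := tb_sign 0 m
      simpa using this
    rw [hsgn]
    congr 1
    unfold f
    have harg : (fun k : Fin n => xor ((2 * m + 1).testBit (2 * (k : ℕ) + 1))
        ((2 * m + 1).testBit (2 * (k : ℕ) + 2))) = A n 0 m := by
      funext k
      simp only [A]
      have e2 : 2 * (k : ℕ) + 2 = (2 * (k : ℕ) + 1) + 1 := rfl
      rw [e2, tb1 m _, tb1 m _]
    rw [harg]
    rfl
  | succ i ih =>
    intro h m
    have hin : i < n := by omega
    -- value of the row below at the sample point
    have hH : qbfH n ψ q (i + 1) (2 ^ (2 * (i + 1)) * (2 * m + 1))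
        = f n ψ q i (4 * m) + f n ψ q i (4 * m + 1) := by
      rw [H_sample n ψ q i (4 * m + 2) _ ?_]
      · rw [Finset.sum_congr rfl (fun j _ => ih (by omega) j), signed_sum]
      · intro j
        have hP : 0 < 2 ^ (2 * i) := by positivity
        have hrw : 2 ^ (2 * (i + 1)) * (2 * m + 1) = 2 ^ (2 * i) * (8 * m + 4) := by ring
        rw [hrw]
        constructor
        · intro hlt
          have := lt_of_mul_lt_mul_left hlt (Nat.zero_le _)
          omega
        · intro hj
          exact mul_lt_mul_of_pos_left (by omega) hP
    have hphi : qbfPhi n ψ q (i + 1) (A n (i + 1) m) =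
        if q ⟨i, hin⟩ then
          qbfPhi n ψ q i (qbfPrepend false (A n (i + 1) m)) ||
            qbfPhi n ψ q i (qbfPrepend true (A n (i + 1) m))
        else
          qbfPhi n ψ q i (qbfPrepend false (A n (i + 1) m)) &&
            qbfPhi n ψ q i (qbfPrepend true (A n (i + 1) m)) := by
      simp [qbfPhi, hin]
    have key : (if q ⟨i, hin⟩ then (if 1 ≤ f n ψ q i (4 * m) + f n ψ q i (4 * m + 1)
          then (1 : ℤ) else 0)
        else (if 2 ≤ f n ψ q i (4 * m) + f n ψ q i (4 * m + 1) then (1 : ℤ) else 0))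
        = f n ψ q (i + 1) m := by
      unfold f
      rw [A_succ_false, A_succ_true, hphi]
      cases hq : q ⟨i, hin⟩ <;>
        cases hb0 : qbfPhi n ψ q i (qbfPrepend false (A n (i + 1) m)) <;>
          cases hb1 : qbfPhi n ψ q i (qbfPrepend true (A n (i + 1) m)) <;>
            norm_num
    unfold qbfG
    rw [if_pos ⟨h, mod_sample (i + 1) m⟩, hH]
    rw [tb_sign (i + 1) m]
    congr 1
    simp only [Nat.succ_ne_zero, if_false, Nat.add_sub_cancel, dif_pos hin]
    exact key

end QbfTab

/-- The final cell of the QBF tableau equals the truth value of the quantified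
Boolean formula `Q_n x_n … Q_1 x_1. ψ(x_1,…,x_n)`. -/
theorem qbf_tableau_final_value
    (n : ℕ) (hn : 1 ≤ n) (ψ : (Fin n → Bool) → Bool) (q : Fin n → Bool) :
    qbfH n ψ q (n + 1) (2 ^ (2 * n) + 1) =
      if qbfPhi n ψ q n (fun _ => false) then 1 else 0 := by
  have hT : ∀ j, 2 ^ (2 * n) * (2 * j + 1) < 2 ^ (2 * n) + 1 ↔ j < 1 := by
    intro j
    have hP : 1 ≤ 2 ^ (2 * n) := Nat.one_le_two_pow
    constructor
    · intro hlt
      by_contra hc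
      push_neg at hc
      have h3 : 2 ^ (2 * n) * 3 ≤ 2 ^ (2 * n) * (2 * j + 1) :=
        Nat.mul_le_mul_left _ (by omega)
      omega
    · intro hj
      have hj0 : j = 0 := by omega
      subst hj0
      have : 2 ^ (2 * n) * (2 * 0 + 1) = 2 ^ (2 * n) := by ring
      omega
  rw [QbfTab.H_sample n ψ q n 1 _ hT, Finset.sum_range_one,
    QbfTab.G_sample n ψ q n le_rfl 0]
  have b0 : Nat.testBit 0 1 = false := by decide
  rw [b0, if_neg (by simp), one_mul]
  unfold QbfTab.f
  have hA : QbfTab.A n n 0 = (fun _ : Fin (n - n) => false) := by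
    funext k
    simp [QbfTab.A]
  rw [hA]
end

section
/- With the QBF tableau construction below (for n ≥ 1, matrix ψ, quantifiers q, increment function G, and tableau H), the following invariant holds: for every i with 0 ≤ i ≤ n and every S < 2^(2n+1) of the form S = w·2^(2i+1) + 2^(2i) (w ∈ ℕ), we have G(i, S, H(i, S)) = (−1)^(bit(S, 2i+2)) · ε, where ε = 1 if Φ_i(fun k => bit(S, 2(i+k)+1) XOR bit(S, 2(i+k)+2)) is true and ε = 0 otherwise. -/
/-!
Row `i + 1` of the tableau accumulates the increments of row `i`, which vanish except at the
times `v·2^(2i+1) + 2^(2i)`. By induction on `i`, the increment at the `v`-th such time is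
`±Φ_i(a(v))`, the sign being bit 1 of `v` and the assignment `a(v)` being read off from the XORs
of the bit pairs of `v`. Writing `v = 4m + r`, the four values of `r` contribute
`Φ_i(0 :: a(m))`, `Φ_i(1 :: a(m))`, `-Φ_i(1 :: a(m))`, `-Φ_i(0 :: a(m))`, so blocks of four
cancel, and at time `(4w+2)·2^(2i+1)`, the `w`-th active time of row `i + 1`, the tableau holds
`Φ_i(0 :: a(w)) + Φ_i(1 :: a(w))`. The threshold `1` (for `∃`) or `2` (for `∀`) turns this count
into `Φ_{i+1}(a(w))`.
-/

open Finset

/-- The `w`-th time at which row `i` of the tableau is active. -/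
def qbfTime (i w : ℕ) : ℕ := w * 2 ^ (2 * i + 1) + 2 ^ (2 * i)

def qbfAssignment {m : ℕ} (u : ℕ) : Fin m → Bool :=
  fun k => xor (u.testBit (2 * k)) (u.testBit (2 * k + 1))

lemma qbfTime_mod (i w : ℕ) : qbfTime i w % 2 ^ (2 * i + 1) = 2 ^ (2 * i) := by
  rw [qbfTime, Nat.mul_add_mod_self_right, Nat.mod_eq_of_lt (Nat.pow_lt_pow_succ one_lt_two)]

lemma testBit_qbfTime (i w j : ℕ) : (qbfTime i w).testBit (2 * i + 1 + j) = w.testBit j := by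
  rw [qbfTime, mul_comm, Nat.testBit_two_pow_mul_add _ (Nat.pow_lt_pow_succ one_lt_two),
    if_neg (by omega), Nat.add_sub_cancel_left]

lemma qbfTime_succ (i w : ℕ) : qbfTime (i + 1) w = (4 * w + 2) * 2 ^ (2 * i + 1) := by
  simp only [qbfTime]
  ring

lemma qbfTime_lt (i w : ℕ) : qbfTime i w < (w + 1) * 2 ^ (2 * i + 1) := by
  have := Nat.pow_lt_pow_succ (a := 2) (n := 2 * i) one_lt_two
  rw [qbfTime]
  linarith

lemma qbfAssignment_qbfTime {m : ℕ} (i w : ℕ) :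
    (fun k : Fin m => xor ((qbfTime i w).testBit (2 * (i + k) + 1))
      ((qbfTime i w).testBit (2 * (i + k) + 2))) = qbfAssignment w := by
  funext k
  rw [show 2 * (i + k) + 2 = 2 * i + 1 + (2 * k + 1) by ring, mul_add, add_right_comm,
    testBit_qbfTime, testBit_qbfTime, qbfAssignment]

lemma qbfAssignment_four_mul_add {n i : ℕ} (m r : ℕ) (hr : r < 4) :
    (qbfAssignment (4 * m + r) : Fin (n - i) → Bool) =
      qbfPrepend (xor (r.testBit 0) (r.testBit 1)) (qbfAssignment m) := by
  funext k
  have hbit := fun j => Nat.testBit_two_pow_mul_add m (show r < 2 ^ 2 by omega) j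
  rw [show 2 ^ 2 * m + r = 4 * m + r by ring] at hbit
  simp only [qbfAssignment, qbfPrepend]
  by_cases hk : (k : ℕ) = 0
  · simp [hk, hbit]
  · rw [dif_neg hk, hbit, hbit, if_neg (by omega), if_neg (by omega)]
    congr 2 <;> omega

section Tableau

variable (n : ℕ) (ψ : (Fin n → Bool) → Bool) (q : Fin n → Bool)

def qbfRowValue (i w : ℕ) : ℤ := qbfG n ψ q i (qbfTime i w) (qbfH n ψ q i (qbfTime i w))

def qbfSignedValue (i w : ℕ) : ℤ :=
  (if w.testBit 1 then -1 else 1) * if qbfPhi n ψ q i (qbfAssignment w) then 1 else 0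

lemma qbfH_succ_eq_sum (i T : ℕ) :
    qbfH n ψ q (i + 1) T = ∑ t ∈ range T, qbfG n ψ q i t (qbfH n ψ q i t) := by
  induction T with
  | zero => rfl
  | succ T ih => rw [sum_range_succ, ← ih]; rfl

lemma qbfG_eq_zero_of_mod_ne {i S : ℕ} (Y : ℤ) (h : S % 2 ^ (2 * i + 1) ≠ 2 ^ (2 * i)) :
    qbfG n ψ q i S Y = 0 := by
  simp [qbfG, h]

lemma qbfH_succ_mul_eq_sum (i u : ℕ) :
    qbfH n ψ q (i + 1) (u * 2 ^ (2 * i + 1)) = ∑ v ∈ range u, qbfRowValue n ψ q i v := by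
  induction u with
  | zero => simp [qbfH_succ_eq_sum]
  | succ u ih =>
    have hlt := Nat.pow_lt_pow_succ (a := 2) (n := 2 * i) one_lt_two
    rw [sum_range_succ, ← ih, qbfH_succ_eq_sum, qbfH_succ_eq_sum, add_mul, one_mul,
      sum_range_add, add_right_inj, sum_eq_single_of_mem (2 ^ (2 * i)) (mem_range.2 hlt),
      qbfRowValue, qbfTime]
    intro s hs hne
    refine qbfG_eq_zero_of_mod_ne n ψ q _ ?_
    rwa [Nat.mul_add_mod_self_right, Nat.mod_eq_of_lt (mem_range.1 hs)]

lemma qbfSignedValue_four_mul_add (i m r : ℕ) (hr : r < 4) :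
    qbfSignedValue n ψ q i (4 * m + r) = (if r.testBit 1 then -1 else 1) *
      if qbfPhi n ψ q i (qbfPrepend (xor (r.testBit 0) (r.testBit 1)) (qbfAssignment m))
      then 1 else 0 := by
  have hbit := Nat.testBit_two_pow_mul_add m (show r < 2 ^ 2 by omega) 1
  rw [show 2 ^ 2 * m + r = 4 * m + r by ring, if_pos (by norm_num)] at hbit
  rw [qbfSignedValue, qbfAssignment_four_mul_add m r hr, hbit]

lemma sum_range_four_mul_qbfSignedValue (i w : ℕ) :
    ∑ v ∈ range (4 * w), qbfSignedValue n ψ q i v = 0 := by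
  induction w with
  | zero => simp
  | succ w ih =>
    rw [mul_add, sum_range_add, ih, zero_add]
    have h := qbfSignedValue_four_mul_add n ψ q i w
    simp only [sum_range_succ, sum_range_zero, zero_add]
    rw [h 0 (by norm_num), h 1 (by norm_num), h 2 (by norm_num), h 3 (by norm_num)]
    simp only [Nat.testBit_eq_decide_div_mod_eq]
    split_ifs <;> simp_all

lemma sum_range_four_mul_add_two_qbfSignedValue (i w : ℕ) :
    ∑ v ∈ range (4 * w + 2), qbfSignedValue n ψ q i v =
      (if qbfPhi n ψ q i (qbfPrepend false (qbfAssignment w)) then 1 else 0) +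
        if qbfPhi n ψ q i (qbfPrepend true (qbfAssignment w)) then 1 else 0 := by
  rw [sum_range_add, sum_range_four_mul_qbfSignedValue, zero_add]
  have h := qbfSignedValue_four_mul_add n ψ q i w
  simp only [sum_range_succ, sum_range_zero, zero_add]
  rw [h 0 (by norm_num), h 1 (by norm_num)]
  simp [Nat.testBit_eq_decide_div_mod_eq]

lemma qbfG_zero_qbfTime (w : ℕ) (Y : ℤ) :
    qbfG n ψ q 0 (qbfTime 0 w) Y =
      (if w.testBit 1 then -1 else 1) * if ψ (qbfAssignment w) then 1 else 0 := by
  have hassign : (fun k : Fin n => xor ((qbfTime 0 w).testBit (2 * k + 1))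
      ((qbfTime 0 w).testBit (2 * k + 2))) = qbfAssignment w := by
    simpa using qbfAssignment_qbfTime (m := n) 0 w
  rw [qbfG, if_pos ⟨Nat.zero_le n, qbfTime_mod 0 w⟩, if_pos rfl, hassign,
    ← testBit_qbfTime 0 w 1]

lemma qbfG_succ_qbfTime {i : ℕ} (hi : i < n) (w : ℕ) (Y : ℤ) :
    qbfG n ψ q (i + 1) (qbfTime (i + 1) w) Y = (if w.testBit 1 then -1 else 1) *
      if q ⟨i, hi⟩ then (if 1 ≤ Y then 1 else 0) else if 2 ≤ Y then 1 else 0 := by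
  rw [qbfG, if_pos ⟨hi, qbfTime_mod (i + 1) w⟩, if_neg (Nat.succ_ne_zero i),
    dif_pos (by omega), testBit_qbfTime _ _ 1]
  rfl

/-- `∃` holds iff at least one, and `∀` iff both, of the two instances hold. -/
lemma qbfPhi_succ_eq_threshold {i : ℕ} (hi : i < n) (b : Fin (n - (i + 1)) → Bool) {Y : ℤ}
    (hY : Y = (if qbfPhi n ψ q i (qbfPrepend false b) then 1 else 0) +
      if qbfPhi n ψ q i (qbfPrepend true b) then 1 else 0) :
    (if q ⟨i, hi⟩ then (if 1 ≤ Y then 1 else 0) else if 2 ≤ Y then 1 else 0 : ℤ) =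
      if qbfPhi n ψ q (i + 1) b then 1 else 0 := by
  simp only [hY, qbfPhi, dif_pos hi]
  cases q ⟨i, hi⟩ <;> cases qbfPhi n ψ q i (qbfPrepend false b) <;>
    cases qbfPhi n ψ q i (qbfPrepend true b) <;> rfl

theorem qbfRowValue_eq_qbfSignedValue :
    ∀ i ≤ n, ∀ w, qbfTime i w < 2 ^ (2 * n + 1) →
      qbfRowValue n ψ q i w = qbfSignedValue n ψ q i w := by
  intro i
  induction i with
  | zero => intro _ w _; exact qbfG_zero_qbfTime n ψ q w _
  | succ i ih =>
    intro hi w hw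
    have hrow : ∀ v ∈ range (4 * w + 2), qbfRowValue n ψ q i v = qbfSignedValue n ψ q i v := by
      intro v hv
      refine ih (by omega) v ((qbfTime_lt i v).trans_le (le_trans ?_ hw.le))
      rw [qbfTime_succ]
      exact Nat.mul_le_mul_right _ (mem_range.1 hv)
    have hH : qbfH n ψ q (i + 1) (qbfTime (i + 1) w) =
        (if qbfPhi n ψ q i (qbfPrepend false (qbfAssignment w)) then 1 else 0) +
          if qbfPhi n ψ q i (qbfPrepend true (qbfAssignment w)) then 1 else 0 := by
      rw [qbfTime_succ, qbfH_succ_mul_eq_sum, sum_congr rfl hrow,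
        sum_range_four_mul_add_two_qbfSignedValue]
    rw [qbfRowValue, qbfG_succ_qbfTime n ψ q (by omega), qbfPhi_succ_eq_threshold n ψ q _ _ hH,
      qbfSignedValue]

end Tableau

theorem qbf_tableau_invariant_general
    (n : ℕ) (ψ : (Fin n → Bool) → Bool) (q : Fin n → Bool) :
    ∀ i ≤ n, ∀ S < 2 ^ (2 * n + 1), (∃ w : ℕ, S = w * 2 ^ (2 * i + 1) + 2 ^ (2 * i)) →
      qbfG n ψ q i S (qbfH n ψ q i S) =
        (if S.testBit (2 * i + 2) then -1 else 1) *
          (if qbfPhi n ψ q i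
              (fun k => xor (S.testBit (2 * (i + (k : ℕ)) + 1))
                            (S.testBit (2 * (i + (k : ℕ)) + 2)))
            then 1 else 0) := by
  rintro i hi S hS ⟨w, hSw⟩
  rw [show S = qbfTime i w from hSw] at hS ⊢
  rw [qbfAssignment_qbfTime, testBit_qbfTime _ _ 1]
  exact qbfRowValue_eq_qbfSignedValue n ψ q i hi w hS

/-- Invariant of the QBF tableau: at each row `i ≤ n` and each time
`S = w·2^(2i+1) + 2^(2i) < 2^(2n+1)`, the increment `G(i, S, H(i, S))` equals
`(−1)^(bit(S,2i+2))` times the truth value of `Φ_i` evaluated at the assignment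
read off from the higher bits of `S`. -/
theorem qbf_tableau_invariant
    (n : ℕ) (hn : 1 ≤ n) (ψ : (Fin n → Bool) → Bool) (q : Fin n → Bool) :
    ∀ i ≤ n, ∀ S < 2 ^ (2 * n + 1), (∃ w : ℕ, S = w * 2 ^ (2 * i + 1) + 2 ^ (2 * i)) →
      qbfG n ψ q i S (qbfH n ψ q i S) =
        (if S.testBit (2 * i + 2) then -1 else 1) *
          (if qbfPhi n ψ q i
              (fun k => xor (S.testBit (2 * (i + (k : ℕ)) + 1))
                            (S.testBit (2 * (i + (k : ℕ)) + 2)))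
            then 1 else 0) :=
  qbf_tableau_invariant_general n ψ q
end

section
/- With the QBF tableau construction below (for n ≥ 1, matrix ψ, quantifiers q, increment function G, and tableau H), the tableau values are bounded: for every natural number i and every T ≤ 2^(2n+1), 0 ≤ H(i, T) ≤ 2. -/
/-- assignment to the outer variables read off from the bits of the time `T`. -/
def qbfAsn (n i : ℕ) (T : ℕ) : Fin (n - i) → Bool :=
  fun k => xor (T.testBit (2 * (i + (k : ℕ)) + 1)) (T.testBit (2 * (i + (k : ℕ)) + 2))

/-- closed form for row `j+1` of the tableau. -/
def qbfCF (n : ℕ) (ψ : (Fin n → Bool) → Bool) (q : Fin n → Bool) (j T : ℕ) : ℤ :=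
  (if qbfPhi n ψ q j (qbfPrepend false (qbfAsn n (j+1) T)) then 1 else 0) *
    ((if 2^(2*j) < T % (2^(2*j+3)) then 1 else 0) - (if 7*2^(2*j) < T % (2^(2*j+3)) then 1 else 0))
  + (if qbfPhi n ψ q j (qbfPrepend true (qbfAsn n (j+1) T)) then 1 else 0) *
    ((if 3*2^(2*j) < T % (2^(2*j+3)) then 1 else 0) - (if 5*2^(2*j) < T % (2^(2*j+3)) then 1 else 0))

lemma prep_asn (n j T : ℕ) :
    qbfPrepend (xor (T.testBit (2*j+1)) (T.testBit (2*j+2))) (qbfAsn n (j+1) T)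
      = qbfAsn n j T := by
  funext k
  simp only [qbfPrepend, qbfAsn]
  split
  · rename_i h
    have h1 : 2 * (j + (k:ℕ)) + 1 = 2*j+1 := by omega
    have h2 : 2 * (j + (k:ℕ)) + 2 = 2*j+2 := by omega
    rw [h1, h2]
  · rename_i h
    have h1 : 2 * (j + 1 + ((k:ℕ) - 1)) + 1 = 2 * (j + (k:ℕ)) + 1 := by omega
    have h2 : 2 * (j + 1 + ((k:ℕ) - 1)) + 2 = 2 * (j + (k:ℕ)) + 2 := by omega
    rw [h1, h2]

lemma asn_congr (n j T T' : ℕ) (h : T / 2^(2*j+3) = T' / 2^(2*j+3)) :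
    qbfAsn n (j+1) T = qbfAsn n (j+1) T' := by
  funext k
  have key : ∀ S : ℕ, ∀ m : ℕ, S.testBit (2*j+3+m) = (S / 2^(2*j+3)).testBit m := by
    intro S m
    rw [Nat.testBit_eq_decide_div_mod_eq, Nat.testBit_eq_decide_div_mod_eq, Nat.div_div_eq_div_mul, ← pow_add]
  have e1 : 2 * (j + 1 + (k:ℕ)) + 1 = 2*j+3 + 2*(k:ℕ) := by omega
  have e2 : 2 * (j + 1 + (k:ℕ)) + 2 = 2*j+3 + (2*(k:ℕ)+1) := by omega
  simp only [qbfAsn, e1, e2, key, h]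

lemma phi_succ (n : ℕ) (ψ : (Fin n → Bool) → Bool) (q : Fin n → Bool) (j : ℕ)
    (h : j < n) (b : Fin (n - (j+1)) → Bool) :
    qbfPhi n ψ q (j+1) b =
      if q ⟨j, h⟩ then
        qbfPhi n ψ q j (qbfPrepend false b) || qbfPhi n ψ q j (qbfPrepend true b)
      else
        qbfPhi n ψ q j (qbfPrepend false b) && qbfPhi n ψ q j (qbfPrepend true b) := by
  simp only [qbfPhi, dif_pos h]

lemma succ_mod_div (M T r : ℕ) (h : T % M = r) (h2 : r + 1 < M) :
    (T+1) % M = r + 1 ∧ (T+1) / M = T / M := by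
  have hM : 1 < M := by omega
  have hmod : (T+1) % M = r + 1 := by
    rw [Nat.add_mod, h, Nat.mod_eq_of_lt hM, Nat.mod_eq_of_lt h2]
  refine ⟨hmod, ?_⟩
  rw [Nat.succ_div, if_neg, add_zero]
  intro hdvd
  have := (Nat.mod_eq_zero_of_dvd hdvd)
  omega

lemma wrap_mod (M T : ℕ) (hM : 0 < M) (h : T % M = M - 1) : (T+1) % M = 0 := by
  rw [Nat.add_mod, h]
  rcases Nat.lt_or_ge M 2 with h1 | h1
  · have : M = 1 := by omega
    simp [this]
  · have e1 : 1 % M = 1 := Nat.mod_eq_of_lt (by omega)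
    have e2 : M - 1 + 1 = M := by omega
    rw [e1, e2, Nat.mod_self]

lemma hG_form (n : ℕ) (ψ : (Fin n → Bool) → Bool) (q : Fin n → Bool)
    (i : ℕ) (hi : i ≤ n) (T : ℕ) (Y : ℤ)
    (hY : i = 0 ∨ ∃ j, i = j + 1 ∧ Y = qbfCF n ψ q j T) :
    qbfG n ψ q i T Y =
      if T % 2^(2*i+1) = 2^(2*i) then
        (if T.testBit (2*i+2) then -1 else 1) *
          (if qbfPhi n ψ q i (qbfAsn n i T) then 1 else 0)
      else 0 := by
  by_cases hc : T % 2^(2*i+1) = 2^(2*i)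
  · rw [if_pos hc, qbfG, if_pos (⟨hi, hc⟩ : i ≤ n ∧ T % 2^(2*i+1) = 2^(2*i))]
    congr 1
    rcases hY with rfl | ⟨j, rfl, hYv⟩
    · rw [if_pos rfl]
      have hfun : ψ (fun k => xor (T.testBit (2*(k:ℕ)+1)) (T.testBit (2*(k:ℕ)+2)))
          = qbfPhi n ψ q 0 (qbfAsn n 0 T) := by
        show ψ _ = ψ _
        congr 1
        funext k
        simp [qbfAsn]
      rw [hfun]
    · rw [if_neg (Nat.succ_ne_zero j)]
      have hjn : j < n := by omega
      simp only [Nat.add_sub_cancel]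
      rw [dif_pos hjn, phi_succ n ψ q j hjn]
      have hc' : T % 2^(2*j+3) = 2^(2*j+2) := by
        rw [show 2*j+3 = 2*(j+1)+1 by ring, show 2*j+2 = 2*(j+1) by ring]; exact hc
      have hp : 0 < (2:ℕ)^(2*j) := pow_pos (by norm_num) _
      have e4 : (2:ℕ)^(2*j+2) = 4*2^(2*j) := by rw [pow_add]; ring
      have i1 : (if (2:ℕ)^(2*j) < 4*2^(2*j) then (1:ℤ) else 0) = 1 := if_pos (by omega)
      have i2 : (if 7*(2:ℕ)^(2*j) < 4*2^(2*j) then (1:ℤ) else 0) = 0 := if_neg (by omega)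
      have i3 : (if 3*(2:ℕ)^(2*j) < 4*2^(2*j) then (1:ℤ) else 0) = 1 := if_pos (by omega)
      have i4 : (if 5*(2:ℕ)^(2*j) < 4*2^(2*j) then (1:ℤ) else 0) = 0 := if_neg (by omega)
      have hY2 : Y = (if qbfPhi n ψ q j (qbfPrepend false (qbfAsn n (j+1) T)) then (1:ℤ) else 0)
          + (if qbfPhi n ψ q j (qbfPrepend true (qbfAsn n (j+1) T)) then (1:ℤ) else 0) := by
        rw [hYv]; simp only [qbfCF, hc', e4, i1, i2, i3, i4]; ring
      rw [hY2]
      cases hq : q ⟨j, hjn⟩ <;>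
        cases hb1 : qbfPhi n ψ q j (qbfPrepend false (qbfAsn n (j+1) T)) <;>
        cases hb2 : qbfPhi n ψ q j (qbfPrepend true (qbfAsn n (j+1) T)) <;>
        simp
  · rw [if_neg hc, qbfG, if_neg (by tauto)]

set_option maxHeartbeats 1000000 in
lemma cf_step (n : ℕ) (ψ : (Fin n → Bool) → Bool) (q : Fin n → Bool)
    (j T : ℕ) (Y : ℤ)
    (hG : qbfG n ψ q j T Y =
      if T % 2^(2*j+1) = 2^(2*j) then
        (if T.testBit (2*j+2) then -1 else 1) *
          (if qbfPhi n ψ q j (qbfAsn n j T) then 1 else 0)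
      else 0) :
    qbfCF n ψ q j (T+1) = qbfCF n ψ q j T + qbfG n ψ q j T Y := by
  have hp : 0 < (2:ℕ)^(2*j) := pow_pos (by norm_num) _
  have hM8 : (2:ℕ)^(2*j+3) = 2^(2*j)*8 := by rw [pow_add]; ring
  have hM2 : (2:ℕ)^(2*j+1) = 2^(2*j)*2 := by rw [pow_add]; ring
  have hM4 : (2:ℕ)^(2*j+2) = 2^(2*j)*4 := by rw [pow_add]; ring
  set d := (2:ℕ)^(2*j) with hd_def
  rw [hG, hM2]
  simp only [qbfCF, hM8, ← hd_def]
  have hrm : T % (d*8) % (d*2) = T % (d*2) := Nat.mod_mod_of_dvd _ ⟨4, by ring⟩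
  have hrlt : T % (d*8) < d*8 := Nat.mod_lt _ (by omega)
  by_cases hc : T % (d*2) = d
  · -- an increment happens at time T
    rw [if_pos hc]
    have hr2 : T % (d*8) % (d*2) = d := by rw [hrm]; exact hc
    obtain ⟨t, hrEq, ht4⟩ : ∃ t, T % (d*8) = d*2*t + d ∧ t < 4 := by
      refine ⟨T % (d*8) / (d*2), ?_, ?_⟩
      · conv_lhs => rw [← Nat.div_add_mod (T % (d*8)) (d*2)]
        rw [hr2]
      · rw [Nat.div_lt_iff_lt_mul (by omega)]
        omega
    have hT : (8*(T/(d*8)) + (2*t+1))*d = T := by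
      have h8 := Nat.div_add_mod T (d*8)
      have hr : (8*(T/(d*8)) + (2*t+1))*d = d*8*(T/(d*8)) + (d*2*t + d) := by ring
      rw [hr, ← hrEq, h8]
    have hdd2 : T / (d*2) = (8*(T/(d*8)) + (2*t+1)) / 2 := by
      conv_lhs => rw [← hT]
      rw [show (8*(T/(d*8)) + (2*t+1))*d = d*(8*(T/(d*8)) + (2*t+1)) by ring,
        show d*2 = d*2 from rfl, Nat.mul_div_mul_left _ _ (by omega : 0 < d)]
    have hdd4 : T / (d*4) = (8*(T/(d*8)) + (2*t+1)) / 4 := by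
      conv_lhs => rw [← hT]
      rw [show (8*(T/(d*8)) + (2*t+1))*d = d*(8*(T/(d*8)) + (2*t+1)) by ring,
        Nat.mul_div_mul_left _ _ (by omega : 0 < d)]
    have hb1 : T.testBit (2*j+1) = decide (t % 2 = 1) := by
      rw [Nat.testBit_eq_decide_div_mod_eq, hM2, hdd2, decide_eq_decide]
      omega
    have hb2 : T.testBit (2*j+2) = decide (t / 2 = 1) := by
      rw [Nat.testBit_eq_decide_div_mod_eq, hM4, hdd4, decide_eq_decide]
      omega
    rw [← prep_asn n j T, hb1, hb2]
    by_cases hw : T % (d*8) = d*8 - 1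
    · -- wrap-around: forces d = 1, t = 3
      have hmm : (d*8-1) % (d*2) = d*2-1 := by
        rw [show d*8-1 = (d*2-1) + (d*2)*3 by omega, Nat.add_mul_mod_self_left,
          Nat.mod_eq_of_lt (by omega)]
      have hd1 : d = 1 := by rw [hw, hmm] at hr2; omega
      have ht3 : t = 3 := by rw [hd1] at hrEq hw; omega
      have h0 : (T+1) % (d*8) = 0 := wrap_mod _ _ (by omega) hw
      rw [h0, ht3]
      rw [show (xor (decide ((3:ℕ) % 2 = 1)) (decide ((3:ℕ) / 2 = 1))) = false from rfl]
      rw [if_pos (show (decide ((3:ℕ) / 2 = 1)) = true from rfl)]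
      set r := T % (d*8) with hr_def
      rw [if_neg (show ¬ d < 0 by omega), if_neg (show ¬ 3*d < 0 by omega),
        if_neg (show ¬ 5*d < 0 by omega), if_neg (show ¬ 7*d < 0 by omega),
        if_pos (show d < r by omega), if_pos (show 3*d < r by omega),
        if_pos (show 5*d < r by omega), if_neg (show ¬ 7*d < r by omega)]
      ring
    · obtain ⟨hmod, hdiv⟩ := succ_mod_div (d*8) T (T % (d*8)) rfl (by omega)
      have hasn : qbfAsn n (j+1) (T+1) = qbfAsn n (j+1) T :=
        asn_congr n j _ _ (by rw [hM8]; exact hdiv)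
      rw [hmod, hasn]
      set r := T % (d*8) with hr_def
      interval_cases t
      · rw [show (xor (decide ((0:ℕ) % 2 = 1)) (decide ((0:ℕ) / 2 = 1))) = false from rfl]
        rw [if_neg (show ¬ (decide ((0:ℕ) / 2 = 1)) = true from by decide)]
        rw [if_pos (show d < r+1 by omega), if_neg (show ¬ 3*d < r+1 by omega),
          if_neg (show ¬ 5*d < r+1 by omega), if_neg (show ¬ 7*d < r+1 by omega),
          if_neg (show ¬ d < r by omega), if_neg (show ¬ 3*d < r by omega),
          if_neg (show ¬ 5*d < r by omega), if_neg (show ¬ 7*d < r by omega)]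
        ring
      · rw [show (xor (decide ((1:ℕ) % 2 = 1)) (decide ((1:ℕ) / 2 = 1))) = true from rfl]
        rw [if_neg (show ¬ (decide ((1:ℕ) / 2 = 1)) = true from by decide)]
        rw [if_pos (show d < r+1 by omega), if_pos (show 3*d < r+1 by omega),
          if_neg (show ¬ 5*d < r+1 by omega), if_neg (show ¬ 7*d < r+1 by omega),
          if_pos (show d < r by omega), if_neg (show ¬ 3*d < r by omega),
          if_neg (show ¬ 5*d < r by omega), if_neg (show ¬ 7*d < r by omega)]
        ring
      · rw [show (xor (decide ((2:ℕ) % 2 = 1)) (decide ((2:ℕ) / 2 = 1))) = true from rfl]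
        rw [if_pos (show (decide ((2:ℕ) / 2 = 1)) = true from rfl)]
        rw [if_pos (show d < r+1 by omega), if_pos (show 3*d < r+1 by omega),
          if_pos (show 5*d < r+1 by omega), if_neg (show ¬ 7*d < r+1 by omega),
          if_pos (show d < r by omega), if_pos (show 3*d < r by omega),
          if_neg (show ¬ 5*d < r by omega), if_neg (show ¬ 7*d < r by omega)]
        ring
      · rw [show (xor (decide ((3:ℕ) % 2 = 1)) (decide ((3:ℕ) / 2 = 1))) = false from rfl]
        rw [if_pos (show (decide ((3:ℕ) / 2 = 1)) = true from rfl)]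
        rw [if_pos (show d < r+1 by omega), if_pos (show 3*d < r+1 by omega),
          if_pos (show 5*d < r+1 by omega), if_pos (show 7*d < r+1 by omega),
          if_pos (show d < r by omega), if_pos (show 3*d < r by omega),
          if_pos (show 5*d < r by omega), if_neg (show ¬ 7*d < r by omega)]
        ring
  · -- no increment at time T
    rw [if_neg hc, add_zero]
    by_cases hw : T % (d*8) = d*8 - 1
    · have hd2 : 2 ≤ d := by
        rcases Nat.lt_or_ge d 2 with h1 | h1
        · exfalso
          have hd1 : d = 1 := by omega
          rw [hd1] at hw hrm hc
          omega
        · exact h1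
      have h0 : (T+1) % (d*8) = 0 := wrap_mod _ _ (by omega) hw
      rw [h0, hw]
      rw [if_neg (show ¬ d < 0 by omega), if_neg (show ¬ 3*d < 0 by omega),
        if_neg (show ¬ 5*d < 0 by omega), if_neg (show ¬ 7*d < 0 by omega),
        if_pos (show d < d*8-1 by omega), if_pos (show 3*d < d*8-1 by omega),
        if_pos (show 5*d < d*8-1 by omega), if_pos (show 7*d < d*8-1 by omega)]
      ring
    · obtain ⟨hmod, hdiv⟩ := succ_mod_div (d*8) T (T % (d*8)) rfl (by omega)
      have hasn : qbfAsn n (j+1) (T+1) = qbfAsn n (j+1) T :=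
        asn_congr n j _ _ (by rw [hM8]; exact hdiv)
      rw [hmod, hasn]
      have e1 : d % (d*2) = d := Nat.mod_eq_of_lt (by omega)
      have e3 : (3*d) % (d*2) = d := by
        rw [show 3*d = d + (d*2)*1 by ring, Nat.add_mul_mod_self_left, e1]
      have e5 : (5*d) % (d*2) = d := by
        rw [show 5*d = d + (d*2)*2 by ring, Nat.add_mul_mod_self_left, e1]
      have e7 : (7*d) % (d*2) = d := by
        rw [show 7*d = d + (d*2)*3 by ring, Nat.add_mul_mod_self_left, e1]
      have n1 : T % (d*8) ≠ d := fun h => hc (by rw [← hrm, h, e1])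
      have n3 : T % (d*8) ≠ 3*d := fun h => hc (by rw [← hrm, h, e3])
      have n5 : T % (d*8) ≠ 5*d := fun h => hc (by rw [← hrm, h, e5])
      have n7 : T % (d*8) ≠ 7*d := fun h => hc (by rw [← hrm, h, e7])
      set r := T % (d*8) with hr_def
      have j1 : (if d < r+1 then (1:ℤ) else 0) = if d < r then 1 else 0 := by
        split_ifs <;> omega
      have j3 : (if 3*d < r+1 then (1:ℤ) else 0) = if 3*d < r then 1 else 0 := by
        split_ifs <;> omega
      have j5 : (if 5*d < r+1 then (1:ℤ) else 0) = if 5*d < r then 1 else 0 := by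
        split_ifs <;> omega
      have j7 : (if 7*d < r+1 then (1:ℤ) else 0) = if 7*d < r then 1 else 0 := by
        split_ifs <;> omega
      rw [j1, j3, j5, j7]

lemma qbfH_eq_cf (n : ℕ) (ψ : (Fin n → Bool) → Bool) (q : Fin n → Bool) :
    ∀ j, j ≤ n → ∀ T, qbfH n ψ q (j+1) T = qbfCF n ψ q j T := by
  intro j
  induction j with
  | zero =>
    intro _ T
    induction T with
    | zero => simp [qbfH, qbfCF]
    | succ T ih =>
      have hstep : qbfH n ψ q (0+1) (T+1)
          = qbfH n ψ q 1 T + qbfG n ψ q 0 T (qbfH n ψ q 0 T) := rfl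
      rw [hstep, ih, ← cf_step n ψ q 0 T (qbfH n ψ q 0 T)
        (hG_form n ψ q 0 (Nat.zero_le n) T _ (Or.inl rfl))]
  | succ j ihj =>
    intro hj T
    induction T with
    | zero => simp [qbfH, qbfCF]
    | succ T ih =>
      have hstep : qbfH n ψ q (j+1+1) (T+1)
          = qbfH n ψ q (j+1+1) T + qbfG n ψ q (j+1) T (qbfH n ψ q (j+1) T) := rfl
      rw [hstep, ih, ← cf_step n ψ q (j+1) T (qbfH n ψ q (j+1) T)
        (hG_form n ψ q (j+1) hj T _ (Or.inr ⟨j, rfl, ihj (by omega) T⟩))]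

lemma cf_bounds (n : ℕ) (ψ : (Fin n → Bool) → Bool) (q : Fin n → Bool) (j T : ℕ) :
    0 ≤ qbfCF n ψ q j T ∧ qbfCF n ψ q j T ≤ 2 := by
  have hp : 0 < (2:ℕ)^(2*j) := pow_pos (by norm_num) _
  simp only [qbfCF]
  set d := (2:ℕ)^(2*j) with hd_def
  set r := T % 2^(2*j+3) with hr_def
  constructor <;> split_ifs <;> omega

lemma qbfH_zero_row (n : ℕ) (ψ : (Fin n → Bool) → Bool) (q : Fin n → Bool) (T : ℕ) :
    qbfH n ψ q 0 T = 0 := by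
  cases T <;> rfl

lemma qbfH_high_zero (n : ℕ) (ψ : (Fin n → Bool) → Bool) (q : Fin n → Bool)
    (i : ℕ) (hi : n < i) (T : ℕ) : qbfH n ψ q (i+1) T = 0 := by
  induction T with
  | zero => rfl
  | succ T ih =>
    have hstep : qbfH n ψ q (i+1) (T+1)
        = qbfH n ψ q (i+1) T + qbfG n ψ q i T (qbfH n ψ q i T) := rfl
    rw [hstep, ih, qbfG, if_neg (by omega ∘ And.left ∘ id)]
    · ring

/-- The QBF tableau values are bounded: `0 ≤ H(i, T) ≤ 2` for all rows `i` and all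
times `T ≤ 2^(2n+1)`. -/
theorem qbf_tableau_bounded
    (n : ℕ) (hn : 1 ≤ n) (ψ : (Fin n → Bool) → Bool) (q : Fin n → Bool) :
    ∀ i : ℕ, ∀ T ≤ 2 ^ (2 * n + 1),
      0 ≤ qbfH n ψ q i T ∧ qbfH n ψ q i T ≤ 2 := by
  intro i T _
  match i with
  | 0 => rw [qbfH_zero_row]; omega
  | (j+1) =>
    rcases le_or_gt j n with hj | hj
    · rw [qbfH_eq_cf n ψ q j hj T]
      exact cf_bounds n ψ q j T
    · rw [qbfH_high_zero n ψ q j hj T]; omega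
end

section
/- Let e : ℕ → ℕ satisfy e(k+1) ≥ e(k) + 2 for every k, let b : ℕ → Bool, and let x = Σ'_{k ∈ ℕ} (if b(k) then (2:ℝ)^(−e(k)) else 0) (the series converges absolutely). Then for every k ∈ ℕ, the integer ⌊2^(e(k)) · x⌋ is odd if and only if b(k) = true. -/
/-- Decoding principle for the final-value theorem: if the bits `b(k)` are stacked
into the real number `x = Σ_k b(k)·2^(−e(k))` with exponent gaps of at least 2, then
each bit `b(k)` is recovered as the parity of `⌊2^(e(k))·x⌋`. -/
theorem stacked_bits_decoding
    (e : ℕ → ℕ) (he : ∀ k : ℕ, e k + 2 ≤ e (k + 1))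
    (b : ℕ → Bool) (x : ℝ)
    (hx : x = ∑' k : ℕ, (if b k then (2 : ℝ) ^ (-(e k : ℤ)) else 0)) :
    ∀ k : ℕ, Odd ⌊(2 : ℝ) ^ (e k) * x⌋ ↔ b k = true := by
  intro k
  set f : ℕ → ℝ := fun j => if b j then (2 : ℝ) ^ (-(e j : ℤ)) else 0 with hfdef
  have hfnn : ∀ j, 0 ≤ f j := by
    intro j; simp only [hfdef]; split <;> positivity
  have hmono' : ∀ i d : ℕ, e i + 2 * d ≤ e (i + d) := by
    intro i d
    induction d with
    | zero => simp
    | succ m ih =>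
      have := he (i + m)
      have : i + (m+1) = (i + m) + 1 := by omega
      rw [this]
      omega
  have hmono : ∀ i j, i ≤ j → e i + 2 * (j - i) ≤ e j := by
    intro i j hij
    have := hmono' i (j - i)
    rwa [Nat.add_sub_cancel' hij] at this
  have hej : ∀ j, j ≤ e j := by intro j; have := hmono 0 j (Nat.zero_le _); omega
  have hfle : ∀ j, f j ≤ (2:ℝ) ^ (-(j:ℤ)) := by
    intro j
    have h2 : (2:ℝ) ^ (-(e j : ℤ)) ≤ (2:ℝ) ^ (-(j:ℤ)) := by
      apply zpow_le_zpow_right₀ one_le_two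
      simp only [neg_le_neg_iff]
      exact_mod_cast hej j
    simp only [hfdef]; split
    · exact h2
    · positivity
  have hgeo : Summable (fun j : ℕ => (2:ℝ) ^ (-(j:ℤ))) := by
    have h : (fun j : ℕ => (2:ℝ) ^ (-(j:ℤ))) = fun j : ℕ => (1/2 : ℝ) ^ j := by
      funext j
      rw [one_div, inv_pow, ← zpow_natCast, ← zpow_neg]
    rw [h]
    exact summable_geometric_of_lt_one (by norm_num) (by norm_num)
  have hsum : Summable f := Summable.of_nonneg_of_le hfnn hfle hgeo
  set g : ℕ → ℝ := fun j => (2:ℝ) ^ (e k) * f j with hgdef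
  have hsumg : Summable g := hsum.mul_left _
  have hxg : (2:ℝ) ^ (e k) * x = ∑' j, g j := by
    rw [hx, ← tsum_mul_left]
  have hsplit := Summable.sum_add_tsum_nat_add (f := g) (k+1) hsumg
  set n : ℤ := ∑ j ∈ Finset.range (k+1), (if b j then (2:ℤ) ^ (e k - e j) else 0) with hndef
  have hfin : ∑ j ∈ Finset.range (k+1), g j = (n : ℝ) := by
    rw [hndef]
    push_cast
    apply Finset.sum_congr rfl
    intro j hj
    have hjk : j ≤ k := by
      simp only [Finset.mem_range] at hj; omega
    have hejk : e j ≤ e k := by have := hmono j k hjk; omega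
    simp only [hgdef, hfdef]
    split
    · rw [← zpow_natCast (2:ℝ) (e k), ← zpow_add₀ (two_ne_zero), ← zpow_natCast (2:ℝ) (e k - e j)]
      congr 1
      omega
    · ring
  set T : ℝ := ∑' j, g (j + (k+1)) with hTdef
  have hTnn : 0 ≤ T := tsum_nonneg (fun j => mul_nonneg (by positivity) (hfnn _))
  have htail_le : ∀ j : ℕ, g (j + (k+1)) ≤ (1/4 : ℝ) ^ (j+1) := by
    intro j
    have hbound : e k + 2 * (j+1) ≤ e (j + (k+1)) := by
      have := hmono k (j + (k+1)) (by omega); omega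
    have h1 : g (j + (k+1)) ≤ (2:ℝ) ^ (e k) * (2:ℝ) ^ (-(e (j + (k+1)) : ℤ)) := by
      apply mul_le_mul_of_nonneg_left _ (by positivity)
      simp only [hfdef]; split
      · exact le_rfl
      · positivity
    have h2 : (2:ℝ) ^ (e k) * (2:ℝ) ^ (-(e (j + (k+1)) : ℤ))
        = (2:ℝ) ^ ((e k : ℤ) - (e (j + (k+1)) : ℤ)) := by
      rw [← zpow_natCast (2:ℝ) (e k), ← zpow_add₀ (two_ne_zero)]
      ring_nf
    have h3 : (2:ℝ) ^ ((e k : ℤ) - (e (j + (k+1)) : ℤ)) ≤ (2:ℝ) ^ ((-2 : ℤ) * (j+1)) := by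
      apply zpow_le_zpow_right₀ one_le_two
      omega
    have h4 : (2:ℝ) ^ ((-2 : ℤ) * (j+1)) = (1/4 : ℝ) ^ (j+1) := by
      rw [show ((j:ℤ)+1) = ((j+1 : ℕ) : ℤ) by push_cast; ring, zpow_mul,
        zpow_natCast]
      norm_num
    calc g (j + (k+1)) ≤ _ := h1
      _ = _ := h2
      _ ≤ _ := h3
      _ = _ := h4
  have hsum4 : Summable (fun j : ℕ => (1/4 : ℝ) ^ (j+1)) := by
    simp only [pow_succ']
    exact (summable_geometric_of_lt_one (by norm_num) (by norm_num)).mul_left _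
  have hT3 : T ≤ 1/3 := by
    have hTle : T ≤ ∑' j : ℕ, (1/4 : ℝ) ^ (j+1) :=
      Summable.tsum_le_tsum htail_le ((summable_nat_add_iff (k+1)).mpr hsumg) hsum4
    have hval : ∑' j : ℕ, (1/4 : ℝ) ^ (j+1) = 1/3 := by
      simp only [pow_succ']
      rw [tsum_mul_left, tsum_geometric_of_lt_one (by norm_num) (by norm_num)]
      norm_num
    linarith
  have heq : (2:ℝ) ^ (e k) * x = (n : ℝ) + T := by
    rw [hxg, ← hsplit, hfin]
  have hfloor : ⌊(2:ℝ) ^ (e k) * x⌋ = n := by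
    rw [heq, Int.floor_intCast_add]
    have : ⌊T⌋ = 0 := by
      rw [Int.floor_eq_zero_iff]
      constructor
      · exact hTnn
      · linarith
    omega
  rw [hfloor]
  -- parity of n
  have hsplit_n : n = (∑ j ∈ Finset.range k, (if b j then (2:ℤ) ^ (e k - e j) else 0))
      + (if b k then 1 else 0) := by
    rw [hndef, Finset.sum_range_succ, Nat.sub_self, pow_zero]
  have heven : (2:ℤ) ∣ ∑ j ∈ Finset.range k, (if b j then (2:ℤ) ^ (e k - e j) else 0) := by
    apply Finset.dvd_sum
    intro j hj
    have hjk : j < k := Finset.mem_range.mp hj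
    have hge : 1 ≤ e k - e j := by
      have := hmono j k (le_of_lt hjk); omega
    split
    · calc (2:ℤ) = 2 ^ 1 := (pow_one 2).symm
        _ ∣ 2 ^ (e k - e j) := pow_dvd_pow 2 hge
    · exact dvd_zero _
  obtain ⟨m, hm⟩ := heven
  rw [hsplit_n, hm]
  cases hb : b k <;> simp [Int.odd_iff, Int.add_mul_emod_self_left]
end

section
/- Let s : ℕ → ℕ be monotone nondecreasing and let h : ℝ → ℝ be continuous on [0,1] and satisfy, for every k ∈ ℕ: (i) |h(t)| ≤ 2^(−(2k+3)) for all t ∈ [1 − 2^(−k), 1]; and (ii) h is differentiable at every t ∈ [0, 1 − 2^(−k)] (within [0,1]) with |h′(t)| ≤ 2^(s(k)). Then for every k ∈ ℕ and all t₀, t₁ ∈ [0,1] with 0 ≤ t₁ − t₀ < 2^(−(s(k)+k)), we have |h(t₀) − h(t₁)| < 2^(−k). -/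
/-!
Below `1 - 2^(-k)` the derivative bound makes `h` Lipschitz with constant `2^(s k)`, so a gap
smaller than `2^(-(s k + k))` moves `h` by less than `2^(-k)`. Otherwise `t₁ > 1 - 2^(-k)`, hence
`t₀ > 1 - 2 * 2^(-k)`, and both points lie in the zone where bound (i) at level `k - 1` gives
`|h| ≤ 2^(-(2k+1))`; the triangle inequality finishes.
-/

open Set

lemma abs_sub_le_mul_of_hasDerivWithinAt_abs_le {f : ℝ → ℝ} {S : Set ℝ} {a b C : ℝ}
    (hab : a ≤ b) (hS : Icc a b ⊆ S)
    (hf : ∀ x ∈ Icc a b, ∃ d, HasDerivWithinAt f d S x ∧ |d| ≤ C) :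
    |f b - f a| ≤ C * (b - a) := by
  choose! d hd hC using hf
  simpa [Real.norm_eq_abs, abs_of_nonneg (sub_nonneg.2 hab)] using
    (convex_Icc a b).norm_image_sub_le_of_norm_hasDerivWithin_le
      (fun x hx => (hd x hx).mono hS) hC (left_mem_Icc.2 hab) (right_mem_Icc.2 hab)

lemma one_sub_two_zpow_neg_pred_le {k : ℕ} {t : ℝ} (ht : 0 ≤ t)
    (hnear : 1 - 2 * (2:ℝ) ^ (-(k : ℤ)) < t) :
    1 - (2:ℝ) ^ (-((k - 1 : ℕ) : ℤ)) ≤ t := by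
  cases k with
  | zero => simpa using ht
  | succ m =>
    have hdouble : (2:ℝ) ^ (-(m : ℤ)) = 2 * 2 ^ (-((m + 1 : ℕ) : ℤ)) := by
      rw [mul_comm, ← zpow_add_one₀ two_ne_zero]
      push_cast
      ring_nf
    simp only [Nat.add_sub_cancel, hdouble]
    linarith

lemma abs_sub_lt_of_abs_le_near_one {h : ℝ → ℝ}
    (hsmall : ∀ k : ℕ, ∀ t ∈ Icc (1 - (2:ℝ) ^ (-(k : ℤ))) 1,
      |h t| ≤ (2:ℝ) ^ (-(2 * (k : ℤ) + 3)))
    {k : ℕ} {t₀ t₁ : ℝ} (ht₀ : 0 ≤ t₀) (ht₁ : t₁ ≤ 1) (hle : t₀ ≤ t₁)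
    (hnear : 1 - 2 * (2:ℝ) ^ (-(k : ℤ)) < t₀) :
    |h t₀ - h t₁| < (2:ℝ) ^ (-(k : ℤ)) := by
  set m := k - 1 with hm
  have hzone : 1 - (2:ℝ) ^ (-(m : ℤ)) ≤ t₀ := one_sub_two_zpow_neg_pred_le ht₀ hnear
  have h₀ := hsmall m t₀ ⟨hzone, hle.trans ht₁⟩
  have h₁ := hsmall m t₁ ⟨hzone.trans hle, ht₁⟩
  calc |h t₀ - h t₁| ≤ |h t₀| + |h t₁| := abs_sub _ _
    _ ≤ (2:ℝ) ^ (-(2 * (m : ℤ) + 3)) * 2 := by linarith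
    _ = (2:ℝ) ^ (-(2 * (m : ℤ) + 2)) := by rw [← zpow_add_one₀ two_ne_zero]; ring_nf
    _ < (2:ℝ) ^ (-(k : ℤ)) := zpow_lt_zpow_right₀ one_lt_two (by omega)

theorem modulus_of_continuity_argument_general
    (s : ℕ → ℕ) (h : ℝ → ℝ)
    (hsmall : ∀ k : ℕ, ∀ t ∈ Set.Icc (1 - (2:ℝ) ^ (-(k : ℤ))) 1,
      |h t| ≤ (2:ℝ) ^ (-(2 * (k : ℤ) + 3)))
    (hderiv : ∀ k : ℕ, ∀ t ∈ Set.Icc (0:ℝ) (1 - (2:ℝ) ^ (-(k : ℤ))),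
      ∃ d : ℝ, HasDerivWithinAt h d (Set.Icc (0:ℝ) 1) t ∧ |d| ≤ (2:ℝ) ^ (s k)) :
    ∀ k : ℕ, ∀ t₀ ∈ Set.Icc (0:ℝ) 1, ∀ t₁ ∈ Set.Icc (0:ℝ) 1,
      0 ≤ t₁ - t₀ → t₁ - t₀ < (2:ℝ) ^ (-((s k : ℤ) + (k : ℤ))) →
      |h t₀ - h t₁| < (2:ℝ) ^ (-(k : ℤ)) := by
  intro k t₀ ht₀ t₁ ht₁ hle hgap
  have hgap_le : (2:ℝ) ^ (-((s k : ℤ) + (k : ℤ))) ≤ 2 ^ (-(k : ℤ)) :=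
    zpow_le_zpow_right₀ one_le_two (by omega)
  by_cases hfar : t₁ ≤ 1 - (2:ℝ) ^ (-(k : ℤ))
  · have hsub : Icc t₀ t₁ ⊆ Icc (0:ℝ) (1 - 2 ^ (-(k : ℤ))) :=
      Icc_subset_Icc ht₀.1 hfar
    have hlip := abs_sub_le_mul_of_hasDerivWithinAt_abs_le (f := h) (sub_nonneg.1 hle)
      (hsub.trans (Icc_subset_Icc_right (by linarith [hgap_le, ht₁.2])))
      (fun x hx => hderiv k x (hsub hx))
    calc |h t₀ - h t₁| = |h t₁ - h t₀| := abs_sub_comm _ _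
      _ ≤ 2 ^ s k * (t₁ - t₀) := hlip
      _ < 2 ^ s k * 2 ^ (-((s k : ℤ) + (k : ℤ))) := by gcongr
      _ = 2 ^ (-(k : ℤ)) := by
        rw [← zpow_natCast, ← zpow_add₀ two_ne_zero]
        ring_nf
  · exact abs_sub_lt_of_abs_le_near_one hsmall ht₀.1 ht₁.2 (sub_nonneg.1 hle)
      (by linarith)

/-- Modulus-of-continuity argument from the EXPSPACE-hardness theorem: a function
that is small near `t = 1` (bound (i)) and has derivative bounded by `2^(s(k))` on
`[0, 1 − 2^(−k)]` (bound (ii)) has modulus of continuity `m ↦ s(m) + m`. -/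
theorem modulus_of_continuity_argument
    (s : ℕ → ℕ) (hs : Monotone s) (h : ℝ → ℝ)
    (hc : ContinuousOn h (Set.Icc (0:ℝ) 1))
    (hsmall : ∀ k : ℕ, ∀ t ∈ Set.Icc (1 - (2:ℝ) ^ (-(k : ℤ))) 1,
      |h t| ≤ (2:ℝ) ^ (-(2 * (k : ℤ) + 3)))
    (hderiv : ∀ k : ℕ, ∀ t ∈ Set.Icc (0:ℝ) (1 - (2:ℝ) ^ (-(k : ℤ))),
      ∃ d : ℝ, HasDerivWithinAt h d (Set.Icc (0:ℝ) 1) t ∧ |d| ≤ (2:ℝ) ^ (s k)) :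
    ∀ k : ℕ, ∀ t₀ ∈ Set.Icc (0:ℝ) 1, ∀ t₁ ∈ Set.Icc (0:ℝ) 1,
      0 ≤ t₁ - t₀ → t₁ - t₀ < (2:ℝ) ^ (-((s k : ℤ) + (k : ℤ))) →
      |h t₀ - h t₁| < (2:ℝ) ^ (-(k : ℤ)) :=
  modulus_of_continuity_argument_general s h hsmall hderiv
end
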